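/- arXiv:1404.2002 — 4 statements merged into one kernel-verified Lean document; each statement's English description precedes it below -/
import Mathlib

section
/- Let λ > 0 and v_0(x) = (-λ - sqrt(λ^2 + (1 - e^{-2x})(e^{2x}λ^2 - 1)))/(1 - e^{-2x}). Then v_0(x) = -λ e^x - λ + e^{-x}(1/(2λ) - λ) + O(e^{-2x}) as x → +∞. -/
open Real

set_option maxHeartbeats 1600000 in
theorem v0_asymptotics (lam : ℝ) (hlam : lam > 0) :
    ∃ C > 0, ∃ x₁ : ℝ, ∀ x ≥ x₁,
      |(-lam - Real.sqrt (lam^2 + (1 - exp (-2*x)) * (exp (2*x) * lam^2 - 1))) / (1 - exp (-2*x))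
        - (-lam * exp x - lam + exp (-x) * (1/(2*lam) - lam))| ≤ C * exp (-2*x) := by
  set K : ℝ := |1/(4*lam^2) - 1| / lam with hKdef
  set B : ℝ := |1/(2*lam) - lam| with hBdef
  have hK0 : 0 ≤ K := div_nonneg (abs_nonneg _) hlam.le
  have hB0 : 0 ≤ B := abs_nonneg _
  refine ⟨(4/3)*(K + lam + B) + 1, by positivity, -Real.log (min (1/2) (lam/2)), ?_⟩
  intro x hx
  set t : ℝ := Real.exp (-x) with htdef
  have ht0 : 0 < t := Real.exp_pos _
  have hmin : (0:ℝ) < min (1/2) (lam/2) := by positivity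
  have htm : t ≤ min (1/2) (lam/2) := by
    rw [htdef]
    calc Real.exp (-x) ≤ Real.exp (Real.log (min (1/2) (lam/2))) :=
          Real.exp_le_exp.2 (by linarith)
      _ = min (1/2) (lam/2) := Real.exp_log hmin
  have thalf : t ≤ 1/2 := le_trans htm (min_le_left _ _)
  have htl : t ≤ lam/2 := le_trans htm (min_le_right _ _)
  have he2x : Real.exp (-2*x) = t^2 := by
    rw [htdef, ← Real.exp_nat_mul]; ring_nf
  have hex : Real.exp x = t⁻¹ := by
    rw [htdef, ← Real.exp_neg]; ring_nf
  have he2x' : Real.exp (2*x) = (t^2)⁻¹ := by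
    rw [← he2x, ← Real.exp_neg]; ring_nf
  have htne : t ≠ 0 := ne_of_gt ht0
  have h1t2 : (0:ℝ) < 1 - t^2 := by nlinarith
  have h1t2ne : (1:ℝ) - t^2 ≠ 0 := ne_of_gt h1t2
  have hlamne : lam ≠ 0 := ne_of_gt hlam
  set u : ℝ := lam^2 - t^2 + t^4 with hudef
  have hu0 : 0 ≤ u := by nlinarith
  have harg : lam^2 + (1 - t^2) * ((t^2)⁻¹ * lam^2 - 1) = u / t^2 := by
    field_simp [hudef]; ring
  set s : ℝ := Real.sqrt u with hsdef
  have hs0 : 0 ≤ s := Real.sqrt_nonneg _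
  have hs2 : s^2 = u := Real.sq_sqrt hu0
  have hslb : lam/2 ≤ s := by nlinarith
  have hsqrt : Real.sqrt (u / t^2) = s / t := by
    rw [Real.sqrt_div hu0, Real.sqrt_sq ht0.le]
  set d : ℝ := lam - t^2/(2*lam) - s with hddef
  set σ : ℝ := lam - t^2/(2*lam) + s with hσdef
  have hdσ : d * σ = t^4 * (1/(4*lam^2) - 1) := by
    have h1 : d * σ = (lam - t^2/(2*lam))^2 - u := by rw [← hs2, hddef, hσdef]; ring
    rw [h1, hudef]; field_simp; ring
  have hσlb : lam ≤ σ := by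
    have : t^2/(2*lam) ≤ lam/2 := by
      rw [div_le_iff₀ (by positivity)]; nlinarith
    rw [hσdef]; linarith
  have hσpos : 0 < σ := lt_of_lt_of_le hlam hσlb
  have hd : |d| ≤ K * t^4 := by
    have h1 : |d| * lam ≤ |d| * σ := mul_le_mul_of_nonneg_left hσlb (abs_nonneg d)
    have h2 : |d| * σ = t^4 * |1/(4*lam^2) - 1| := by
      rw [← abs_of_pos hσpos, ← abs_mul, hdσ, abs_mul, abs_of_nonneg (by positivity : (0:ℝ) ≤ t^4)]
    rw [hKdef]
    rw [div_mul_eq_mul_div, le_div_iff₀ hlam]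
    calc |d| * lam ≤ |d| * σ := h1
      _ = t^4 * |1/(4*lam^2) - 1| := h2
      _ = |1/(4*lam^2) - 1| * t^4 := by ring
  set N : ℝ := d - lam*t^3 + t^4*(1/(2*lam) - lam) with hNdef
  have hN : |N| ≤ (K + lam + B) * t^3 := by
    have h1 : |N| ≤ |d| + lam*t^3 + B*t^4 := by
      calc |N| ≤ |d - lam*t^3| + |t^4*(1/(2*lam) - lam)| := abs_add_le _ _
        _ ≤ |d| + |lam*t^3| + |t^4*(1/(2*lam) - lam)| := by
            have := abs_sub d (lam*t^3); linarith [abs_sub_abs_le_abs_sub d (lam*t^3)]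
        _ = |d| + lam*t^3 + B*t^4 := by
            rw [abs_mul, abs_mul, abs_of_pos hlam,
              abs_of_nonneg (by positivity : (0:ℝ) ≤ t^3),
              abs_of_nonneg (by positivity : (0:ℝ) ≤ t^4), hBdef]
            ring
    have ht43 : t^4 ≤ t^3 := by nlinarith [pow_nonneg ht0.le 3]
    have hk4 : K * t^4 ≤ K * t^3 := mul_le_mul_of_nonneg_left ht43 hK0
    have hb4 : B * t^4 ≤ B * t^3 := mul_le_mul_of_nonneg_left ht43 hB0
    nlinarith [hd]
  -- rewrite the goal in terms of t, s
  rw [he2x, he2x', hex, htdef, harg, hsqrt]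
  have hE : (-lam - s / t) / (1 - t ^ 2) -
      (-lam * t⁻¹ - lam + t * (1 / (2 * lam) - lam)) = N / (t * (1 - t^2)) := by
    rw [hNdef, hddef]
    field_simp
    ring
  rw [hE, abs_div, abs_of_pos (by positivity : (0:ℝ) < t * (1 - t^2))]
  have hden : (3/4) * t ≤ t * (1 - t^2) := by nlinarith
  have hstep : |N| / (t * (1 - t^2)) ≤ ((K + lam + B) * t^3) / ((3/4) * t) :=
    div_le_div₀ (by positivity) hN (by positivity) hden
  have heq : ((K + lam + B) * t^3) / ((3/4) * t) = (4/3)*(K + lam + B) * t^2 := by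
    field_simp
  calc |N| / (t * (1 - t^2)) ≤ ((K + lam + B) * t^3) / ((3/4) * t) := hstep
    _ = (4/3)*(K + lam + B) * t^2 := heq
    _ ≤ ((4/3)*(K + lam + B) + 1) * t^2 := by nlinarith
end

section
/- For μ = 1/(2√2) and α = 1/4, the inequality (α + μ e^{-x}(1 + 1/(1 + μ^2 e^{2x})))^2 ≤ e^{-2x} + μ^2 holds for all x ∈ ℝ. -/
open Real

theorem key_inequality :
    ∀ x : ℝ,
      ((1/4 : ℝ) + (1/(2*Real.sqrt 2)) * exp (-x) *
        (1 + 1/(1 + (1/(2*Real.sqrt 2))^2 * exp (2*x))))^2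
      ≤ exp (-2*x) + (1/(2*Real.sqrt 2))^2 := by
  intro x
  have hs : Real.sqrt 2 > 0 := Real.sqrt_pos.mpr (by norm_num)
  have hs2 : (Real.sqrt 2)^2 = 2 := Real.sq_sqrt (by norm_num)
  have hmu : ((1/(2*Real.sqrt 2)) : ℝ)^2 = 1/8 := by
    rw [div_pow, mul_pow, hs2]; norm_num
  rw [hmu]
  have hE : exp (-2*x) = exp (-x) ^ 2 := by
    rw [← Real.exp_nat_mul]; ring_nf
  have hEpos : 0 < exp (-x) := Real.exp_pos _
  have hE2pos : 0 < exp (2*x) := Real.exp_pos _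
  have hEE : exp (-x) * exp (2*x) = exp x := by
    rw [← Real.exp_add]; ring_nf
  set t : ℝ := 1/(1 + (1/8) * exp (2*x)) with ht
  have hden : (0:ℝ) < 1 + (1/8) * exp (2*x) := by positivity
  have ht0 : 0 ≤ t := by positivity
  have ht1 : t ≤ 1 := by
    rw [ht]; rw [div_le_one hden]; nlinarith
  have hmupos : (0:ℝ) < 1/(2*Real.sqrt 2) := by positivity
  have hb : (1/(2*Real.sqrt 2)) * exp (-x) * (1 + t) ≤ 2 * ((1/(2*Real.sqrt 2)) * exp (-x)) := by
    nlinarith [mul_pos hmupos hEpos]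
  have hbpos : 0 ≤ (1/(2*Real.sqrt 2)) * exp (-x) * (1 + t) := by positivity
  rw [hE]
  nlinarith [sq_nonneg ((1/4:ℝ) - (1/(2*Real.sqrt 2)) * exp (-x) * (1 + t)),
    sq_nonneg ((1/(2*Real.sqrt 2)) * exp (-x)), hmu, hb, hbpos,
    mul_pos hmupos hEpos]
end

section
/- Define h_μ(x) = sqrt(e^{-2x} + μ^2) - μ e^{-x}(1 + 1/(1 + μ^2 e^{2x})). For μ = 1/(2√2), one has h_μ(x) ≥ 1/4 for all x ∈ ℝ. -/
open Real

theorem h_mu_lower_bound :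
    ∀ x : ℝ,
      Real.sqrt (exp (-2*x) + (1/(2*Real.sqrt 2))^2)
        - (1/(2*Real.sqrt 2)) * exp (-x) *
          (1 + 1/(1 + (1/(2*Real.sqrt 2))^2 * exp (2*x))) ≥ 1/4 := by
  intro x
  have hs2 : Real.sqrt 2 ^ 2 = 2 := Real.sq_sqrt (by norm_num)
  have hs0 : 0 < Real.sqrt 2 := Real.sqrt_pos.mpr (by norm_num)
  set r := Real.sqrt 2 with hrdef
  set t := Real.exp (-x) with htdef
  have ht : 0 < t := Real.exp_pos _
  have hmu2 : (1/(2*r))^2 = (1:ℝ)/8 := by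
    rw [div_pow, mul_pow, hs2]; norm_num
  have hex2 : Real.exp (-2*x) = t^2 := by
    rw [show (-2:ℝ)*x = -x + -x by ring, Real.exp_add, htdef]; ring
  have hex2' : Real.exp (2*x) = (t^2)⁻¹ := by
    rw [← hex2, ← Real.exp_neg]; norm_num
  rw [hmu2, hex2, hex2']
  set u := Real.sqrt (t^2 + 1/8) with hudef
  have hu2 : u^2 = t^2 + 1/8 := Real.sq_sqrt (by positivity)
  have hu0 : 0 ≤ u := Real.sqrt_nonneg _
  have ht2 : (t^2 : ℝ) ≠ 0 := by positivity
  have h81 : (0:ℝ) < 8*t^2+1 := by positivity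
  have hden : (1:ℝ) + 1/8 * (t^2)⁻¹ ≠ 0 := by positivity
  have hinner : (1:ℝ) + 1/(1 + 1/8 * (t^2)⁻¹) = (16*t^2+1)/(8*t^2+1) := by
    field_simp
    ring
  rw [hinner]
  -- abbreviations
  have hd : (0:ℝ) < 2*r*(8*t^2+1) := by
    apply mul_pos (by linarith) h81
  -- the key squared-twice polynomial inequality
  have hQ0 : (0:ℝ) ≤ 256*t^6+128*t^4+15*t^2+1/2 := by positivity
  have hB0 : (0:ℝ) ≤ 2*t*(8*t^2+1)*(16*t^2+1) := by positivity
  have hrQ0 : (0:ℝ) ≤ r*(256*t^6+128*t^4+15*t^2+1/2) := by positivity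
  have hsqdiff : (r*(256*t^6+128*t^4+15*t^2+1/2))^2
      - (2*t*(8*t^2+1)*(16*t^2+1))^2
      = 1/2 + 26*t^2 + 514*t^4 + 4864*t^6 + 23552*t^8 + 65536*t^10 + 131072*t^12 := by
    rw [mul_pow, hs2]; ring
  have hQB : 2*t*(8*t^2+1)*(16*t^2+1) ≤ r*(256*t^6+128*t^4+15*t^2+1/2) := by
    have hpos : (0:ℝ) ≤ 1/2 + 26*t^2 + 514*t^4 + 4864*t^6 + 23552*t^8 + 65536*t^10 + 131072*t^12 := by
      positivity
    have hle : (2*t*(8*t^2+1)*(16*t^2+1))^2 ≤ (r*(256*t^6+128*t^4+15*t^2+1/2))^2 := by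
      linarith [hsqdiff]
    have := Real.sqrt_le_sqrt hle
    rwa [Real.sqrt_sq hB0, Real.sqrt_sq hrQ0] at this
  -- second squaring step: d*u ≥ d/4 + N
  have hdu0 : (0:ℝ) ≤ 2*r*(8*t^2+1)*u := by positivity
  have hN0 : (0:ℝ) ≤ 2*r*(8*t^2+1)/4 + t*(16*t^2+1) := by positivity
  have hdu2 : (2*r*(8*t^2+1)*u)^2 = (8*t^2+1)^3 := by
    rw [mul_pow, mul_pow, mul_pow, hs2, hu2]; ring
  have hrhs2 : (2*r*(8*t^2+1)/4 + t*(16*t^2+1))^2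
      = (8*t^2+1)^2/2 + r*(8*t^2+1)*t*(16*t^2+1) + t^2*(16*t^2+1)^2 := by
    have : (2*r*(8*t^2+1)/4 + t*(16*t^2+1))^2
        = r^2*(8*t^2+1)^2/4 + r*(8*t^2+1)*t*(16*t^2+1) + t^2*(16*t^2+1)^2 := by ring
    rw [this, hs2]; ring
  have h1 : r * (2*t*(8*t^2+1)*(16*t^2+1))
      ≤ r * (r*(256*t^6+128*t^4+15*t^2+1/2)) :=
    mul_le_mul_of_nonneg_left hQB (le_of_lt hs0)
  have h2 : r * (r*(256*t^6+128*t^4+15*t^2+1/2))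
      = 2*(256*t^6+128*t^4+15*t^2+1/2) := by
    rw [← mul_assoc, ← sq, hs2]
  have h3 : r*(8*t^2+1)*t*(16*t^2+1) ≤ 256*t^6+128*t^4+15*t^2+1/2 := by
    rw [h2] at h1
    ring_nf at h1 ⊢
    linarith
  have hsq : (2*r*(8*t^2+1)/4 + t*(16*t^2+1))^2 ≤ (2*r*(8*t^2+1)*u)^2 := by
    rw [hdu2, hrhs2]
    have hid : (8*t^2+1)^3
        = (8*t^2+1)^2/2 + (256*t^6+128*t^4+15*t^2+1/2) + t^2*(16*t^2+1)^2 := by ring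
    linarith [h3, hid]
  have hfin : 2*r*(8*t^2+1)/4 + t*(16*t^2+1) ≤ 2*r*(8*t^2+1)*u := by
    have := Real.sqrt_le_sqrt hsq
    rwa [Real.sqrt_sq hN0, Real.sqrt_sq hdu0] at this
  -- conclude
  have hrepr : u - 1/(2*r) * t * ((16*t^2+1)/(8*t^2+1))
      = (2*r*(8*t^2+1)*u - t*(16*t^2+1)) / (2*r*(8*t^2+1)) := by
    field_simp
  rw [ge_iff_le, hrepr, le_div_iff₀ hd]
  linarith
end

section
/- Suppose u : ℝ → ℝ is twice differentiable, u'(x) ≤ 0 for all x, λ > 0, and κ(x) = λ e^x/sqrt(1+u'(x)^2) - 1 satisfies κ'(x) = λ e^x sqrt(1+u'(x)^2) - λ e^{2x} u'(x) κ(x). If κ(x_0) > 0 for some x_0, then κ is nondecreasing on [x_0, ∞), and in particular κ(x) ≥ κ(x_0) > 0 for all x ≥ x_0. -/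
open Real

theorem curvature_monotone_after_positive
    (u u' : ℝ → ℝ) (lam : ℝ) (hlam : lam > 0)
    (hu : ∀ x, HasDerivAt u (u' x) x)
    (hu_nonpos : ∀ x, u' x ≤ 0)
    (κ : ℝ → ℝ)
    (hκ : ∀ x, κ x = lam * exp x / Real.sqrt (1 + (u' x)^2) - 1)
    (hκ' : ∀ x, HasDerivAt κ
      (lam * exp x * Real.sqrt (1 + (u' x)^2) - lam * exp (2*x) * u' x * κ x) x)
    (x₀ : ℝ) (hx₀ : κ x₀ > 0) :
    MonotoneOn κ (Set.Ici x₀) ∧ ∀ x ≥ x₀, κ x ≥ κ x₀ ∧ κ x > 0 := by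
  have hdpos : ∀ x, 0 ≤ κ x →
      0 < lam * exp x * Real.sqrt (1 + (u' x)^2) - lam * exp (2*x) * u' x * κ x := by
    intro x hx
    have h1 : 0 < Real.sqrt (1 + (u' x)^2) := Real.sqrt_pos.mpr (by positivity)
    have h2 : 0 < lam * exp x * Real.sqrt (1 + (u' x)^2) := by positivity
    have h3 : lam * exp (2*x) * u' x * κ x ≤ 0 := by
      apply mul_nonpos_of_nonpos_of_nonneg _ hx
      exact mul_nonpos_of_nonneg_of_nonpos (by positivity) (hu_nonpos x)
    linarith
  have hcont : Continuous κ := by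
    rw [continuous_iff_continuousAt]
    exact fun x => (hκ' x).continuousAt
  have hderiv : ∀ x, deriv κ x =
      lam * exp x * Real.sqrt (1 + (u' x)^2) - lam * exp (2*x) * u' x * κ x :=
    fun x => (hκ' x).deriv
  -- κ stays positive on [x₀, ∞)
  have hpos : ∀ x ≥ x₀, κ x > 0 := by
    by_contra h
    push_neg at h
    obtain ⟨x, hx, hκx⟩ := h
    set S : Set ℝ := {y | y ∈ Set.Icc x₀ x ∧ κ y ≤ 0} with hS
    have hSne : S.Nonempty := ⟨x, ⟨hx, le_refl x⟩, hκx⟩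
    have hSclosed : IsClosed S := by
      apply IsClosed.inter isClosed_Icc
      exact isClosed_le hcont continuous_const
    have hSbdd : BddBelow S := ⟨x₀, fun y hy => hy.1.1⟩
    set m := sInf S with hm
    have hmS : m ∈ S := hSclosed.csInf_mem hSne hSbdd
    have hmgt : x₀ < m := by
      rcases lt_or_eq_of_le hmS.1.1 with h' | h'
      · exact h'
      · exfalso; rw [← h'] at hmS; linarith [hmS.2]
    have hposIco : ∀ y ∈ Set.Ico x₀ m, 0 < κ y := by
      intro y hy
      by_contra hneg
      push_neg at hneg
      have : y ∈ S := ⟨⟨hy.1, le_trans hy.2.le hmS.1.2⟩, hneg⟩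
      exact absurd (csInf_le hSbdd this) (not_le.mpr hy.2)
    have hmono : StrictMonoOn κ (Set.Icc x₀ m) := by
      apply strictMonoOn_of_deriv_pos (convex_Icc _ _) hcont.continuousOn
      intro y hy
      rw [interior_Icc] at hy
      rw [hderiv y]
      exact hdpos y (hposIco y ⟨hy.1.le, hy.2⟩).le
    have : κ x₀ < κ m :=
      hmono ⟨le_refl _, hmgt.le⟩ ⟨hmgt.le, le_refl _⟩ hmgt
    linarith [hmS.2]
  have hmono : StrictMonoOn κ (Set.Ici x₀) := by
    apply strictMonoOn_of_deriv_pos (convex_Ici _) hcont.continuousOn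
    intro y hy
    rw [interior_Ici] at hy
    rw [hderiv y]
    exact hdpos y (hpos y (le_of_lt hy)).le
  refine ⟨hmono.monotoneOn, fun x hx => ⟨?_, hpos x hx⟩⟩
  exact hmono.monotoneOn (Set.self_mem_Ici) hx hx
end
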